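/- Exact PDAM equality for signed loss: For any round with learned model M̂, learned policy π̂, expert π⋆, and true dynamics M⋆, we have (1−γ)[J^ω_{M⋆}(π̂) − J^ω_{M⋆}(π⋆)] = γ·ℓ^{sn}(M̂) + E_{s∼d_{ω,π⋆}}[V^{π̂}_{M̂}(s) − E_{a∼π⋆(s)}Q^{π̂}_{M̂}(s,a)], where ℓ^{sn}(M̂) = E_{(s,a)∼D_{ω,π̂}}[E_{s'∼M⋆(s,a)}V^{π̂}_{M̂}(s') − E_{s''∼M̂(s,a)}V^{π̂}_{M̂}(s'')] + E_{(s,a)∼D_{ω,π⋆}}[E_{s''∼M̂(s,a)}V^{π̂}_{M̂}(s'') − E_{s'∼M⋆(s,a)}V^{π̂}_{M̂}(s')]. -/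

import Mathlib

/-!
Both sides are linear functionals of the visitation distributions, so the identity follows from
two facts about a distribution `D` obeying the Bellman flow equation of a policy `π` under
dynamics `P`: integrating `q s a - γ * E_{s' ∼ P(s,a)} f s'` against `D` telescopes to
`(1 - γ) E_ω f` plus the `d_{ω,π}`-average of `E_{a∼π(s)} q s a - f s`, for every `f` and `q`.
Taking `f` a value function and `q` its one-step lookahead, the average vanishes on-policy; for
the expert's visitation it is the advantage term of the statement, and the remaining model terms
assemble into the signed loss.
-/

open Finset

noncomputable section

variable {S A : Type*} [Fintype S] [Fintype A]

/-- When `D` is the discounted state-action visitation of a policy `π` under dynamics `P`, the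
Bellman flow equation reads `D s a = π s a * stateInflow γ ω D P s`, and this is the state
visitation `d_{ω,π}`. -/
def stateInflow (γ : ℝ) (ω : S → ℝ) (D : S → A → ℝ) (P : S → A → S → ℝ) (s : S) : ℝ :=
  (1 - γ) * ω s + γ * ∑ s₀, ∑ a₀, D s₀ a₀ * P s₀ a₀ s

variable {γ : ℝ} {ω : S → ℝ} {π D : S → A → ℝ} {P : S → A → S → ℝ}

lemma sum_stateInflow_mul (f : S → ℝ) :
    ∑ s, stateInflow γ ω D P s * f s
      = (1 - γ) * ∑ s, ω s * f s + γ * ∑ s, ∑ a, D s a * ∑ s', P s a s' * f s' := by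
  simp only [stateInflow, add_mul, sum_add_distrib, mul_assoc, sum_mul, mul_sum]
  rw [sum_comm]
  exact congrArg _ (sum_congr rfl fun s₀ _ => sum_comm)

section Flow

variable (hD : ∀ s a, D s a = π s a * stateInflow γ ω D P s)
include hD

lemma sum_sum_mul_eq_sum_stateInflow_mul (q : S → A → ℝ) :
    ∑ s, ∑ a, D s a * q s a = ∑ s, stateInflow γ ω D P s * ∑ a, π s a * q s a := by
  refine sum_congr rfl fun s _ => ?_
  rw [mul_sum]
  exact sum_congr rfl fun a _ => by rw [hD]; ring

lemma sum_eq_stateInflow (hπ : ∀ s, ∑ a, π s a = 1) (s : S) :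
    ∑ a, D s a = stateInflow γ ω D P s := by
  simp_rw [hD s, ← sum_mul, hπ, one_mul]

theorem sum_cost_add_model_gap (c : S → A → ℝ) (Q : S → A → S → ℝ) (V : S → ℝ) :
    ∑ s, ∑ a, D s a * c s a
        + γ * ∑ s, ∑ a, D s a * ((∑ s', Q s a s' * V s') - ∑ s', P s a s' * V s')
      = (1 - γ) * ∑ s, ω s * V s
        - ∑ s, stateInflow γ ω D P s *
            (V s - ∑ a, π s a * (c s a + γ * ∑ s', Q s a s' * V s')) := by
  have h_lookahead := sum_sum_mul_eq_sum_stateInflow_mul hD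
    (fun s a => c s a + γ * ∑ s', Q s a s' * V s')
  have h_inflow := sum_stateInflow_mul (γ := γ) (ω := ω) (D := D) (P := P) V
  simp only [mul_add, mul_sub, sum_add_distrib, sum_sub_distrib, ← mul_sum,
    mul_left_comm (D _ _) γ] at h_lookahead ⊢
  linarith

theorem sum_cost_eq_value {c : S → A → ℝ} {V : S → ℝ}
    (hV : ∀ s, V s = ∑ a, π s a * (c s a + γ * ∑ s', P s a s' * V s')) :
    ∑ s, ∑ a, D s a * c s a = (1 - γ) * ∑ s, ω s * V s := by
  simpa only [sub_self, mul_zero, sum_const_zero, add_zero, sub_zero, ← hV] using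
    sum_cost_add_model_gap hD c P V

end Flow

end

theorem pdam_signed_loss_equality_general
    {S A : Type*} [Fintype S] [Fintype A]
    (γ : ℝ)
    (c : S → A → ℝ)
    (ω : S → ℝ)
    (pihat pistar : S → A → ℝ)
    (hpistar1 : ∀ s, ∑ a, pistar s a = 1)
    (Mstar Mhat : S → A → S → ℝ)
    (VhH VhS VsS : S → ℝ)
    (hVhH : ∀ s, VhH s = ∑ a, pihat s a * (c s a + γ * ∑ s', Mhat s a s' * VhH s'))
    (hVhS : ∀ s, VhS s = ∑ a, pihat s a * (c s a + γ * ∑ s', Mstar s a s' * VhS s'))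
    (hVsS : ∀ s, VsS s = ∑ a, pistar s a * (c s a + γ * ∑ s', Mstar s a s' * VsS s'))
    (Dh Ds : S → A → ℝ)
    (hDh : ∀ s a, Dh s a = pihat s a *
      ((1 - γ) * ω s + γ * ∑ s0, ∑ a0, Dh s0 a0 * Mstar s0 a0 s))
    (hDs : ∀ s a, Ds s a = pistar s a *
      ((1 - γ) * ω s + γ * ∑ s0, ∑ a0, Ds s0 a0 * Mstar s0 a0 s))
    -- the signed loss of the learned model M̂
    (lsn : ℝ)
    (hlsn : lsn =
        (∑ s, ∑ a, Dh s a *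
          ((∑ s', Mstar s a s' * VhH s') - ∑ s'', Mhat s a s'' * VhH s''))
      + ∑ s, ∑ a, Ds s a *
          ((∑ s'', Mhat s a s'' * VhH s'') - ∑ s', Mstar s a s' * VhH s')) :
    (1 - γ) * ((∑ s, ω s * VhS s) - ∑ s, ω s * VsS s)
      = γ * lsn
        + ∑ s, (∑ a, Ds s a) *
            (VhH s - ∑ a, pistar s a * (c s a + γ * ∑ s', Mhat s a s' * VhH s')) := by
  have h_learner := sum_cost_eq_value hDh hVhS
  have h_expert := sum_cost_eq_value hDs hVsS
  have h_learner_sim := sum_cost_add_model_gap hDh c Mhat VhH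
  have h_expert_sim := sum_cost_add_model_gap hDs c Mhat VhH
  have h_learner_on_policy :
      ∑ s, stateInflow γ ω Dh Mstar s *
        (VhH s - ∑ a, pihat s a * (c s a + γ * ∑ s', Mhat s a s' * VhH s')) = 0 :=
    sum_eq_zero fun s _ => by rw [← hVhH s, sub_self, mul_zero]
  simp only [← sum_eq_stateInflow hDs hpistar1] at h_expert_sim
  have h_flip : ∑ s, ∑ a, Dh s a *
        ((∑ s', Mstar s a s' * VhH s') - ∑ s', Mhat s a s' * VhH s')
      = -∑ s, ∑ a, Dh s a * ((∑ s', Mhat s a s' * VhH s') - ∑ s', Mstar s a s' * VhH s') := by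
    simp only [← sum_neg_distrib, ← mul_neg, neg_sub]
  rw [hlsn, h_flip]
  linarith

/-- Exact PDAM equality for the signed loss:
`(1−γ)[J^ω_{M⋆}(π̂) − J^ω_{M⋆}(π⋆)] = γ·ℓ^{sn}(M̂) + E_{s∼d_{ω,π⋆}}[V^{π̂}_{M̂}(s) − E_{a∼π⋆}Q^{π̂}_{M̂}(s,a)]`. -/
theorem pdam_signed_loss_equality
    {S A : Type*} [Fintype S] [Fintype A]
    (γ : ℝ) (hγ0 : 0 ≤ γ) (hγ1 : γ < 1)
    (c : S → A → ℝ) (hc0 : ∀ s a, 0 ≤ c s a) (hc1 : ∀ s a, c s a ≤ 1)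
    (ω : S → ℝ) (hω0 : ∀ s, 0 ≤ ω s) (hω1 : ∑ s, ω s = 1)
    (pihat pistar : S → A → ℝ)
    (hpihat0 : ∀ s a, 0 ≤ pihat s a) (hpihat1 : ∀ s, ∑ a, pihat s a = 1)
    (hpistar0 : ∀ s a, 0 ≤ pistar s a) (hpistar1 : ∀ s, ∑ a, pistar s a = 1)
    (Mstar Mhat : S → A → S → ℝ)
    (hMstar0 : ∀ s a s', 0 ≤ Mstar s a s') (hMstar1 : ∀ s a, ∑ s', Mstar s a s' = 1)
    (hMhat0 : ∀ s a s', 0 ≤ Mhat s a s') (hMhat1 : ∀ s a, ∑ s', Mhat s a s' = 1)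
    (VhH VhS VsS : S → ℝ)
    (hVhH : ∀ s, VhH s = ∑ a, pihat s a * (c s a + γ * ∑ s', Mhat s a s' * VhH s'))
    (hVhS : ∀ s, VhS s = ∑ a, pihat s a * (c s a + γ * ∑ s', Mstar s a s' * VhS s'))
    (hVsS : ∀ s, VsS s = ∑ a, pistar s a * (c s a + γ * ∑ s', Mstar s a s' * VsS s'))
    (Dh Ds : S → A → ℝ)
    (hDh : ∀ s a, Dh s a = pihat s a *
      ((1 - γ) * ω s + γ * ∑ s0, ∑ a0, Dh s0 a0 * Mstar s0 a0 s))
    (hDs : ∀ s a, Ds s a = pistar s a *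
      ((1 - γ) * ω s + γ * ∑ s0, ∑ a0, Ds s0 a0 * Mstar s0 a0 s))
    -- the signed loss of the learned model M̂
    (lsn : ℝ)
    (hlsn : lsn =
        (∑ s, ∑ a, Dh s a *
          ((∑ s', Mstar s a s' * VhH s') - ∑ s'', Mhat s a s'' * VhH s''))
      + ∑ s, ∑ a, Ds s a *
          ((∑ s'', Mhat s a s'' * VhH s'') - ∑ s', Mstar s a s' * VhH s')) :
    (1 - γ) * ((∑ s, ω s * VhS s) - ∑ s, ω s * VsS s)
      = γ * lsn
        + ∑ s, (∑ a, Ds s a) *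
            (VhH s - ∑ a, pistar s a * (c s a + γ * ∑ s', Mhat s a s' * VhH s')) :=
  pdam_signed_loss_equality_general γ c ω pihat pistar hpistar1 Mstar Mhat VhH VhS VsS hVhH hVhS
    hVsS Dh Ds hDh hDs lsn hlsn
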